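/- arXiv:1204.0829 — 2 statements merged into one kernel-verified Lean document; each statement's English description precedes it below -/
import Mathlib

section
/- Let a countable group G act by homeomorphisms on a second countable Hausdorff space X. Suppose there exist a countable base 𝒰 for X and a compact set K ⊆ X such that the G-algebra generated by 𝒰 ∪ {K} admits a finitely additive G-invariant probability measure ρ with ρ(K) > 0. Then there exists a countably additive G-invariant Borel probability measure on X. -/
/-! Approximate `ρ` from outside by open sets of the `G`-algebra:
`λ C = ⨅ {ρ U | U open in the algebra, C ⊆ U}`. Finite unions of basic open sets lie in the
algebra, so disjoint compacts are separated by open sets of the algebra and `λ` is additive on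
them; thus `λ` is a content, `G`-invariant because `ρ` is, and nonzero since `ρ K ≤ λ K`.
The Borel measure it induces is `G`-invariant, finite and nonzero; normalize it. -/

open scoped ENNReal Pointwise

/-- The `G`-algebra of sets generated by a family `S`: the smallest algebra of subsets
of `X` containing `S` and closed under the `G`-action. -/
inductive GSetAlg (G : Type*) {X : Type*} [Group G] [MulAction G X] (S : Set (Set X)) :
    Set X → Prop
  | basic : ∀ A ∈ S, GSetAlg G S A
  | empty : GSetAlg G S ∅
  | compl : ∀ A, GSetAlg G S A → GSetAlg G S Aᶜ
  | union : ∀ A B, GSetAlg G S A → GSetAlg G S B → GSetAlg G S (A ∪ B)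
  | smul : ∀ (g : G) (A), GSetAlg G S A → GSetAlg G S (g • A)

open MeasureTheory TopologicalSpace

def FinitelyAdditiveOn {X : Type*} (𝒜 : Set X → Prop) (ρ : Set X → ℝ≥0∞) : Prop :=
  ∀ A B, 𝒜 A → 𝒜 B → Disjoint A B → ρ (A ∪ B) = ρ A + ρ B

namespace GSetAlg

variable {G X : Type*} [Group G] [MulAction G X] {S : Set (Set X)} {A B : Set X}

theorem univ : GSetAlg G S Set.univ := by
  simpa using GSetAlg.compl ∅ GSetAlg.empty

theorem inter (hA : GSetAlg G S A) (hB : GSetAlg G S B) : GSetAlg G S (A ∩ B) := by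
  simpa [Set.compl_union] using (union _ _ (compl _ hA) (compl _ hB)).compl

theorem diff (hA : GSetAlg G S A) (hB : GSetAlg G S B) : GSetAlg G S (A \ B) := by
  simpa [Set.sdiff_eq] using hA.inter (compl _ hB)

theorem sUnion_of_finite {T : Set (Set X)} (hT : T.Finite) (h : ∀ A ∈ T, GSetAlg G S A) :
    GSetAlg G S (⋃₀ T) := by
  induction T, hT using Set.Finite.induction_on with
  | empty => simpa using GSetAlg.empty
  | insert _ _ ih =>
    rw [Set.sUnion_insert]
    exact union _ _ (h _ (Set.mem_insert _ _)) (ih fun B hB => h B (Set.mem_insert_of_mem _ hB))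

theorem exists_isOpen_between [TopologicalSpace X] {𝒰 : Set (Set X)}
    (h𝒰 : IsTopologicalBasis 𝒰) (h𝒰S : 𝒰 ⊆ S) {C V : Set X}
    (hC : IsCompact C) (hV : IsOpen V) (hCV : C ⊆ V) :
    ∃ W, GSetAlg G S W ∧ IsOpen W ∧ C ⊆ W ∧ W ⊆ V := by
  have hcover : C ⊆ ⋃ U ∈ {U | U ∈ 𝒰 ∧ U ⊆ V}, id U := fun x hx => by
    obtain ⟨U, hU, hxU, hUV⟩ := h𝒰.exists_subset_of_mem_open (hCV hx) hV
    exact Set.mem_biUnion (⟨hU, hUV⟩ : U ∈ {U | U ∈ 𝒰 ∧ U ⊆ V}) hxU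
  obtain ⟨T, hT𝒰, hTfin, hCT⟩ :=
    hC.elim_finite_subcover_image (fun U hU => h𝒰.isOpen hU.1) hcover
  refine ⟨⋃₀ T, sUnion_of_finite hTfin fun A hA => basic _ (h𝒰S (hT𝒰 hA).1),
    isOpen_sUnion fun A hA => h𝒰.isOpen (hT𝒰 hA).1, by rwa [Set.sUnion_eq_biUnion],
    Set.sUnion_subset fun A hA => (hT𝒰 hA).2⟩

variable {ρ : Set X → ℝ≥0∞}

theorem mono_of_additive (hρ : FinitelyAdditiveOn (GSetAlg G S) ρ)
    (hA : GSetAlg G S A) (hB : GSetAlg G S B) (hAB : A ⊆ B) : ρ A ≤ ρ B := by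
  rw [← Set.union_sdiff_cancel hAB, hρ _ _ hA (hB.diff hA) disjoint_sdiff_self_right]
  exact le_self_add

theorem union_le_of_additive (hρ : FinitelyAdditiveOn (GSetAlg G S) ρ)
    (hA : GSetAlg G S A) (hB : GSetAlg G S B) : ρ (A ∪ B) ≤ ρ A + ρ B := by
  rw [← Set.union_sdiff_self, hρ _ _ hA (hB.diff hA) disjoint_sdiff_self_right]
  gcongr
  exact mono_of_additive hρ (hB.diff hA) hB Set.sdiff_subset

end GSetAlg

section OuterContent

variable {G X : Type*} [Group G] [MulAction G X] [TopologicalSpace X] {S : Set (Set X)}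
  {ρ : Set X → ℝ≥0∞} {C D : Set X}

variable (G S ρ) in
noncomputable def algOuterContent (C : Set X) : ℝ≥0∞ :=
  ⨅ (U : Set X) (_ : GSetAlg G S U ∧ IsOpen U ∧ C ⊆ U), ρ U

theorem algOuterContent_le {U : Set X} (hU : GSetAlg G S U) (hUo : IsOpen U) (hCU : C ⊆ U) :
    algOuterContent G S ρ C ≤ ρ U :=
  iInf₂_le U ⟨hU, hUo, hCU⟩

theorem le_algOuterContent {a : ℝ≥0∞}
    (h : ∀ U, GSetAlg G S U → IsOpen U → C ⊆ U → a ≤ ρ U) : a ≤ algOuterContent G S ρ C :=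
  le_iInf₂ fun U hU => h U hU.1 hU.2.1 hU.2.2

theorem algOuterContent_mono : Monotone (algOuterContent G S ρ) := fun _ _ hCD =>
  le_algOuterContent fun _ hU hUo hDU => algOuterContent_le hU hUo (hCD.trans hDU)

theorem algOuterContent_le_univ : algOuterContent G S ρ C ≤ ρ Set.univ :=
  algOuterContent_le GSetAlg.univ isOpen_univ (Set.subset_univ C)

theorem le_algOuterContent_of_additive (hρ : FinitelyAdditiveOn (GSetAlg G S) ρ)
    (hC : GSetAlg G S C) : ρ C ≤ algOuterContent G S ρ C :=
  le_algOuterContent fun _ hU _ hCU => GSetAlg.mono_of_additive hρ hC hU hCU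

theorem algOuterContent_union_le (hρ : FinitelyAdditiveOn (GSetAlg G S) ρ) :
    algOuterContent G S ρ (C ∪ D) ≤ algOuterContent G S ρ C + algOuterContent G S ρ D := by
  refine ENNReal.le_iInf₂_add_iInf₂ fun U hU V hV => ?_
  exact (algOuterContent_le (hU.1.union _ _ hV.1) (hU.2.1.union hV.2.1)
    (Set.union_subset_union hU.2.2 hV.2.2)).trans (GSetAlg.union_le_of_additive hρ hU.1 hV.1)

theorem add_le_algOuterContent_union [T2Space X] {𝒰 : Set (Set X)}
    (h𝒰 : IsTopologicalBasis 𝒰) (h𝒰S : 𝒰 ⊆ S) (hρ : FinitelyAdditiveOn (GSetAlg G S) ρ)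
    (hC : IsCompact C) (hD : IsCompact D) (hCD : Disjoint C D) :
    algOuterContent G S ρ C + algOuterContent G S ρ D ≤ algOuterContent G S ρ (C ∪ D) := by
  obtain ⟨V, W, hV, hW, hCV, hDW, hVW⟩ :=
    SeparatedNhds.of_isCompact_isCompact_isClosed hC hD hD.isClosed hCD
  obtain ⟨V', hV'alg, hV'o, hCV', hV'V⟩ := GSetAlg.exists_isOpen_between (G := G) h𝒰 h𝒰S hC hV hCV
  obtain ⟨W', hW'alg, hW'o, hDW', hW'W⟩ := GSetAlg.exists_isOpen_between (G := G) h𝒰 h𝒰S hD hW hDW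
  refine le_algOuterContent fun U hU hUo hCDU => ?_
  have hdisj : Disjoint (U ∩ V') (U ∩ W') :=
    hVW.mono (Set.inter_subset_right.trans hV'V) (Set.inter_subset_right.trans hW'W)
  calc algOuterContent G S ρ C + algOuterContent G S ρ D ≤ ρ (U ∩ V') + ρ (U ∩ W') :=
        add_le_add
          (algOuterContent_le (hU.inter hV'alg) (hUo.inter hV'o)
            (Set.subset_inter (Set.subset_union_left.trans hCDU) hCV'))
          (algOuterContent_le (hU.inter hW'alg) (hUo.inter hW'o)
            (Set.subset_inter (Set.subset_union_right.trans hCDU) hDW'))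
    _ = ρ (U ∩ V' ∪ U ∩ W') := (hρ _ _ (hU.inter hV'alg) (hU.inter hW'alg) hdisj).symm
    _ ≤ ρ U := GSetAlg.mono_of_additive hρ ((hU.inter hV'alg).union _ _ (hU.inter hW'alg)) hU
        (Set.union_subset Set.inter_subset_left Set.inter_subset_left)

theorem algOuterContent_smul_le [ContinuousConstSMul G X]
    (hρ : ∀ (g : G) (A : Set X), GSetAlg G S A → ρ (g • A) = ρ A) (g : G) (C : Set X) :
    algOuterContent G S ρ (g • C) ≤ algOuterContent G S ρ C :=
  le_algOuterContent fun U hU hUo hCU =>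
    (algOuterContent_le (hU.smul g U) (hUo.smul g) (Set.smul_set_mono hCU)).trans_eq (hρ g U hU)

theorem algOuterContent_smul [ContinuousConstSMul G X]
    (hρ : ∀ (g : G) (A : Set X), GSetAlg G S A → ρ (g • A) = ρ A) (g : G) (C : Set X) :
    algOuterContent G S ρ (g • C) = algOuterContent G S ρ C := by
  refine (algOuterContent_smul_le hρ g C).antisymm ?_
  simpa using algOuterContent_smul_le hρ g⁻¹ (g • C)

end OuterContent

namespace MeasureTheory.Content

variable {X : Type*} [TopologicalSpace X]

noncomputable def ofENNReal (m : Set X → ℝ≥0∞) (hm_ne_top : ∀ C, m C ≠ ∞) (hm_mono : Monotone m)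
    (hm_union_le : ∀ C D, m (C ∪ D) ≤ m C + m D)
    (hm_union : ∀ C D, IsCompact C → IsCompact D → Disjoint C D → m C + m D ≤ m (C ∪ D)) :
    Content X where
  toFun K := (m K).toNNReal
  mono' K L hKL := ENNReal.toNNReal_mono (hm_ne_top _) (hm_mono hKL)
  sup_disjoint' K L hKL _ _ := by
    rw [Compacts.coe_sup, ← ENNReal.toNNReal_add (hm_ne_top _) (hm_ne_top _),
      (hm_union_le K L).antisymm (hm_union K L K.isCompact L.isCompact hKL)]
  sup_le' K L := by
    rw [Compacts.coe_sup, ← ENNReal.toNNReal_add (hm_ne_top _) (hm_ne_top _)]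
    exact ENNReal.toNNReal_mono (ENNReal.add_ne_top.2 ⟨hm_ne_top _, hm_ne_top _⟩) (hm_union_le K L)

theorem ofENNReal_apply {m : Set X → ℝ≥0∞} (hm_ne_top hm_mono hm_union_le hm_union)
    (K : Compacts X) : ofENNReal m hm_ne_top hm_mono hm_union_le hm_union K = m K :=
  ENNReal.coe_toNNReal (hm_ne_top K)

variable [R1Space X] [MeasurableSpace X] [BorelSpace X] (c : Content X)

theorem measure_univ_le {a : ℝ≥0∞} (h : ∀ K, c K ≤ a) : c.measure Set.univ ≤ a := by
  rw [c.measure_apply MeasurableSet.univ, c.outerMeasure_of_isOpen _ isOpen_univ]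
  exact iSup₂_le fun K _ => h K

theorem le_measure_compacts (K : Compacts X) : c K ≤ c.measure K :=
  (c.le_outerMeasure_compacts K).trans (le_toMeasure_apply _ _ _)

theorem smulInvariantMeasure {G : Type*} [Group G] [MulAction G X] [ContinuousConstSMul G X]
    (h : ∀ (g : G) (K : Compacts X), c (K.map (g • ·) (continuous_const_smul g)) = c K) :
    SMulInvariantMeasure G X c.measure where
  measure_preimage_smul g s hs := by
    rw [c.measure_apply (measurableSet_preimage (measurable_const_smul g) hs), c.measure_apply hs]
    exact c.outerMeasure_preimage (Homeomorph.smul g) (h g) s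

end MeasureTheory.Content

theorem stmt_12_general {G X : Type*} [Group G] [TopologicalSpace X] [T2Space X]
    [MeasurableSpace X] [BorelSpace X] [MulAction G X]
    (hcont : ∀ g : G, Continuous fun x : X => g • x)
    (𝒰 : Set (Set X))
    (h𝒰b : TopologicalSpace.IsTopologicalBasis 𝒰)
    (K : Set X) (hK : IsCompact K)
    (ρ : Set X → ℝ≥0∞) (hρ1 : ρ Set.univ = 1)
    (hρadd : ∀ A B : Set X, GSetAlg G (𝒰 ∪ {K}) A → GSetAlg G (𝒰 ∪ {K}) B →
      Disjoint A B → ρ (A ∪ B) = ρ A + ρ B)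
    (hρinv : ∀ (g : G) (A : Set X), GSetAlg G (𝒰 ∪ {K}) A → ρ (g • A) = ρ A)
    (hρK : 0 < ρ K) :
    ∃ μ : MeasureTheory.Measure X, MeasureTheory.IsProbabilityMeasure μ ∧
      ∀ (g : G) (S : Set X), μ (g • S) = μ S := by
  have : ContinuousConstSMul G X := ⟨hcont⟩
  set m := algOuterContent G (𝒰 ∪ {K}) ρ
  have hm_le_one (C : Set X) : m C ≤ 1 := hρ1 ▸ algOuterContent_le_univ
  let c := Content.ofENNReal m (fun C => ((hm_le_one C).trans_lt ENNReal.one_lt_top).ne)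
    algOuterContent_mono (fun _ _ => algOuterContent_union_le hρadd)
    (fun _ _ => add_le_algOuterContent_union h𝒰b Set.subset_union_left hρadd)
  have hc (C : Compacts X) : c C = m C := Content.ofENNReal_apply ..
  have : SMulInvariantMeasure G X c.measure := c.smulInvariantMeasure fun g C => by
    rw [hc, hc, Compacts.coe_map, Set.image_smul]
    exact algOuterContent_smul hρinv g C
  have : IsFiniteMeasure c.measure :=
    ⟨(c.measure_univ_le fun C => (hc C).trans_le (hm_le_one C)).trans_lt ENNReal.one_lt_top⟩
  have hρK_le : ρ K ≤ c.measure K := calc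
    ρ K ≤ m K := le_algOuterContent_of_additive hρadd (.basic K (Set.mem_union_right _ rfl))
    _ = c ⟨K, hK⟩ := (hc ⟨K, hK⟩).symm
    _ ≤ c.measure K := c.le_measure_compacts ⟨K, hK⟩
  have : NeZero c.measure := ⟨fun h => hρK.ne' (by simpa [h] using hρK_le)⟩
  exact ⟨(c.measure Set.univ)⁻¹ • c.measure, inferInstance, measure_smul _⟩

/-- Let a countable group `G` act by homeomorphisms on a second
countable Hausdorff space `X`. Suppose there are a countable base `𝒰` and a compact set
`K ⊆ X` such that the `G`-algebra generated by `𝒰 ∪ {K}` carries a finitely additive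
`G`-invariant probability measure `ρ` with `ρ(K) > 0`. Then there exists a countably
additive `G`-invariant Borel probability measure on `X`. -/
theorem stmt_12 {G X : Type*} [Group G] [Countable G] [TopologicalSpace X] [T2Space X]
    [SecondCountableTopology X] [MeasurableSpace X] [BorelSpace X] [MulAction G X]
    (hcont : ∀ g : G, Continuous fun x : X => g • x)
    (𝒰 : Set (Set X)) (h𝒰c : 𝒰.Countable)
    (h𝒰b : TopologicalSpace.IsTopologicalBasis 𝒰)
    (K : Set X) (hK : IsCompact K)
    (ρ : Set X → ℝ≥0∞) (hρ1 : ρ Set.univ = 1)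
    (hρadd : ∀ A B : Set X, GSetAlg G (𝒰 ∪ {K}) A → GSetAlg G (𝒰 ∪ {K}) B →
      Disjoint A B → ρ (A ∪ B) = ρ A + ρ B)
    (hρinv : ∀ (g : G) (A : Set X), GSetAlg G (𝒰 ∪ {K}) A → ρ (g • A) = ρ A)
    (hρK : 0 < ρ K) :
    ∃ μ : MeasureTheory.Measure X, MeasureTheory.IsProbabilityMeasure μ ∧
      ∀ (g : G) (S : Set X), μ (g • S) = μ S :=
  stmt_12_general hcont 𝒰 h𝒰b K hK ρ hρ1 hρadd hρinv hρK
end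

section
/- Let T be a homeomorphism of a Polish space X such that for every nonempty open V ⊆ X there is d ≥ 1 with {T^{nd}(V)}_{n∈ℕ} having the finite intersection property (all finite sub-intersections nonempty). Then for every nonempty open V and every N ∈ ℕ, the set F = {kd : k ≤ N} is a d-syndetic subset of ℤ of length Nd with ⋂_{n∈F} T^n(V) ≠ ∅; consequently every nonempty open set contains arbitrarily long d-syndetic sets for some d, and X has no non-meager Baire measurable weakly wandering subset. -/
/-- A finite nonempty set `F ⊆ ℤ` is `d`-syndetic if consecutive gaps are at most `d`. -/
def IsSyndetic (d : ℕ) (F : Finset ℤ) : Prop :=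
  F.Nonempty ∧ ∀ m ∈ F, ∀ m' ∈ F, m < m' → ∃ m'' ∈ F, m < m'' ∧ m'' ≤ m + (d : ℤ)

/-- The length `max F - min F` of a finite set `F ⊆ ℤ` (junk value `0` if `F = ∅`). -/
noncomputable def synLen (F : Finset ℤ) : ℤ :=
  if h : F.Nonempty then F.max' h - F.min' h else 0

/-!
The first two claims are bookkeeping about the progression `{k d : k ≤ N}`. For the last one,
let `A` be Baire measurable and non-meagre, pick an open `U` with `A =ᵇ U`, and let `d` be the
step given by the hypothesis for `U`. Pigeonholing `H` modulo `d` gives `a < b` in `H` with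
`b - a = k d`. Since `U ∩ T^(kd) U` is a nonempty open set and `A ∩ T^(kd) A` differs from it
by a meagre set, the Baire category theorem makes `A ∩ T^(kd) A` nonempty, so `T^a A` and
`T^b A` meet.
-/

open Filter Topology

def progression (d N : ℕ) : Finset ℤ :=
  (Finset.range (N + 1)).image fun k => ((k * d : ℕ) : ℤ)

lemma mem_progression {d N : ℕ} {m : ℤ} :
    m ∈ progression d N ↔ ∃ k ≤ N, ((k * d : ℕ) : ℤ) = m := by
  simp [progression]

lemma zero_mem_progression (d N : ℕ) : (0 : ℤ) ∈ progression d N :=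
  mem_progression.2 ⟨0, N.zero_le, by simp⟩

lemma isSyndetic_progression (d N : ℕ) : IsSyndetic d (progression d N) := by
  refine ⟨⟨0, zero_mem_progression d N⟩, ?_⟩
  rintro _ ha _ hb hlt
  obtain ⟨a, -, rfl⟩ := mem_progression.1 ha
  obtain ⟨b, hbN, rfl⟩ := mem_progression.1 hb
  have hlt : a * d < b * d := by exact_mod_cast hlt
  have hd : 0 < d := Nat.pos_of_ne_zero (by rintro rfl; simp at hlt)
  have hab : a < b := lt_of_mul_lt_mul_right hlt (Nat.zero_le d)
  refine ⟨(((a + 1) * d : ℕ) : ℤ), mem_progression.2 ⟨a + 1, by omega, rfl⟩, ?_, ?_⟩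
  · exact_mod_cast Nat.mul_lt_mul_of_pos_right (Nat.lt_succ_self a) hd
  · push_cast; linarith

lemma synLen_progression (d N : ℕ) : synLen (progression d N) = (N * d : ℕ) := by
  have hne : (progression d N).Nonempty := ⟨0, zero_mem_progression d N⟩
  have hmax : (progression d N).max' hne = (N * d : ℕ) := by
    refine le_antisymm (Finset.max'_le _ _ _ ?_)
      (Finset.le_max' _ _ (mem_progression.2 ⟨N, le_rfl, rfl⟩))
    rintro _ hm
    obtain ⟨k, hk, rfl⟩ := mem_progression.1 hm
    exact_mod_cast Nat.mul_le_mul_right d hk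
  have hmin : (progression d N).min' hne = 0 := by
    refine le_antisymm (Finset.min'_le _ _ (zero_mem_progression d N)) (Finset.le_min' _ _ _ ?_)
    rintro _ hm
    obtain ⟨k, -, rfl⟩ := mem_progression.1 hm
    positivity
  rw [synLen, dif_pos hne, hmax, hmin, sub_zero]

theorem Set.Infinite.exists_lt_dvd_sub {H : Set ℤ} (hH : H.Infinite) {d : ℤ} (hd : 0 < d) :
    ∃ a ∈ H, ∃ b ∈ H, a < b ∧ d ∣ b - a := by
  obtain ⟨a, ha, b, hb, hab, hmod⟩ := hH.exists_lt_map_eq_of_mapsTo (f := (· % d))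
    (fun n _ => Set.mem_Ico.2 ⟨Int.emod_nonneg n hd.ne', Int.emod_lt_of_pos n hd⟩)
    (Set.finite_Ico 0 d)
  exact ⟨a, ha, b, hb, hab, Int.ModEq.dvd hmod⟩

section

variable {X : Type*} [TopologicalSpace X]

theorem Filter.EventuallyEq.isMeagre_iff {s t : Set X} (h : s =ᵇ t) :
    IsMeagre s ↔ IsMeagre t :=
  congr_sets h.compl.mem_iff

theorem Filter.EventuallyEq.image_homeomorph {Y : Type*} [TopologicalSpace Y]
    {s t : Set X} (h : s =ᵇ t) (f : X ≃ₜ Y) : f '' s =ᵇ f '' t := by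
  simp only [← f.preimage_symm]
  exact h.comp_tendsto (tendsto_residual_of_isOpenMap f.symm.continuous f.symm.isOpenMap)

theorem Filter.EventuallyEq.nonempty_of_isOpen [BaireSpace X] {s U : Set X} (h : s =ᵇ U)
    (hU : IsOpen U) (hne : U.Nonempty) : s.Nonempty := by
  by_contra hs
  rw [Set.not_nonempty_iff_eq_empty] at hs
  subst hs
  exact not_isMeagre_of_isOpen hU hne (h.isMeagre_iff.1 IsMeagre.empty)

theorem Equiv.Perm.continuous_zpow {T : Equiv.Perm X} (hT : Continuous T)
    (hT' : Continuous T.symm) (n : ℤ) : Continuous ⇑(T ^ n) := by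
  induction n using Int.induction_on with
  | zero => exact continuous_id
  | succ k ih => rw [zpow_add_one, Equiv.Perm.coe_mul]; exact ih.comp hT
  | pred k ih => rw [zpow_sub_one, Equiv.Perm.coe_mul, Equiv.Perm.inv_def]; exact ih.comp hT'

def Equiv.Perm.zpowHomeomorph {T : Equiv.Perm X} (hT : Continuous T) (hT' : Continuous T.symm)
    (n : ℤ) : X ≃ₜ X where
  toEquiv := T ^ n
  continuous_toFun := continuous_zpow hT hT' n
  continuous_invFun := by
    show Continuous ⇑(T ^ n).symm
    simpa only [zpow_neg, Equiv.Perm.inv_def] using continuous_zpow hT hT' (-n)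

theorem Filter.EventuallyEq.nonempty_inter_image [BaireSpace X] {A U : Set X} (h : A =ᵇ U)
    (hU : IsOpen U) (f : X ≃ₜ X) (hne : (U ∩ f '' U).Nonempty) : (A ∩ f '' A).Nonempty :=
  (h.inter (h.image_homeomorph f)).nonempty_of_isOpen (hU.inter (f.isOpenMap U hU)) hne

theorem not_pairwise_disjoint_image_zpow [BaireSpace X] {T : Equiv.Perm X} (hT : Continuous T)
    (hT' : Continuous T.symm)
    (hrec : ∀ V : Set X, IsOpen V → V.Nonempty → ∃ d : ℕ, 1 ≤ d ∧
      ∀ k : ℕ, (V ∩ (T ^ ((k * d : ℕ) : ℤ)) '' V).Nonempty)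
    {A : Set X} (hA : BaireMeasurableSet A) (hA' : ¬ IsMeagre A) {H : Set ℤ} (hH : H.Infinite) :
    ¬ H.Pairwise fun h h' => Disjoint ((T ^ h) '' A) ((T ^ h') '' A) := by
  intro hdisj
  obtain ⟨U, hU, hAU⟩ := hA.residualEq_isOpen
  have hUne : U.Nonempty :=
    Set.nonempty_iff_ne_empty.2 fun hU' => hA' (hAU.isMeagre_iff.2 (hU' ▸ IsMeagre.empty))
  obtain ⟨d, hd, hUrec⟩ := hrec U hU hUne
  obtain ⟨a, ha, b, hb, hab, k, hk⟩ := hH.exists_lt_dvd_sub (d := d) (by exact_mod_cast hd)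
  lift k to ℕ using by nlinarith
  have hba : b = a + ((k * d : ℕ) : ℤ) := by push_cast; linarith
  obtain ⟨z, hzA, hzA'⟩ := hAU.nonempty_inter_image hU (Equiv.Perm.zpowHomeomorph hT hT' _)
    (hUrec k)
  refine Set.disjoint_left.1 (hdisj ha hb hab.ne) ⟨z, hzA, rfl⟩ ?_
  rw [hba, zpow_add, Equiv.Perm.coe_mul, Set.image_comp]
  exact Set.mem_image_of_mem _ hzA'

end

/-- Let `T` be a homeomorphism of a Polish space `X` such that for
every nonempty open `V` there is `d ≥ 1` with `{T^(n·d)(V)}_{n ∈ ℕ}` having the finite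
intersection property. Then for every nonempty open `V` there is `d ≥ 1` such that for
every `N` the set `F = {k·d : k ≤ N}` is a `d`-syndetic subset of `ℤ` of length `N·d`
with `⋂_{n ∈ F} T^n(V) ≠ ∅`; consequently every nonempty open set contains arbitrarily
long `d`-syndetic sets for some `d ≥ 1`, and `X` has no non-meager Baire measurable
weakly wandering subset. -/
theorem stmt_18 {X : Type*} [TopologicalSpace X] [PolishSpace X]
    (T : Equiv.Perm X) (hT : Continuous T) (hT' : Continuous T.symm)
    (hyp : ∀ V : Set X, IsOpen V → V.Nonempty → ∃ d : ℕ, 1 ≤ d ∧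
      ∀ t : Finset ℕ, (⋂ n ∈ t, (T ^ ((n * d : ℕ) : ℤ)) '' V).Nonempty) :
    (∀ V : Set X, IsOpen V → V.Nonempty → ∃ d : ℕ, 1 ≤ d ∧ ∀ N : ℕ,
      IsSyndetic d ((Finset.range (N + 1)).image fun k => ((k * d : ℕ) : ℤ)) ∧
      synLen ((Finset.range (N + 1)).image fun k => ((k * d : ℕ) : ℤ)) = (N * d : ℕ) ∧
      (⋂ n ∈ (Finset.range (N + 1)).image fun k => ((k * d : ℕ) : ℤ),
        (T ^ n) '' V).Nonempty) ∧
    (∀ V : Set X, IsOpen V → V.Nonempty → ∃ d : ℕ, 1 ≤ d ∧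
      ∀ l : ℕ, ∃ F : Finset ℤ, IsSyndetic d F ∧ (l : ℤ) ≤ synLen F ∧
        (⋂ n ∈ F, (T ^ n) '' V).Nonempty) ∧
    ¬ ∃ A : Set X, BaireMeasurableSet A ∧ ¬ IsMeagre A ∧
      ∃ H : Set ℤ, H.Infinite ∧
        H.Pairwise fun h h' => Disjoint ((T ^ h) '' A) ((T ^ h') '' A) := by
  have progressions : ∀ V : Set X, IsOpen V → V.Nonempty → ∃ d : ℕ, 1 ≤ d ∧ ∀ N : ℕ,
      IsSyndetic d (progression d N) ∧ synLen (progression d N) = (N * d : ℕ) ∧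
      (⋂ n ∈ progression d N, (T ^ n) '' V).Nonempty := by
    intro V hV hVne
    obtain ⟨d, hd, hfip⟩ := hyp V hV hVne
    refine ⟨d, hd, fun N => ⟨isSyndetic_progression d N, synLen_progression d N, ?_⟩⟩
    rw [progression, Finset.set_biInter_finset_image]
    exact hfip _
  refine ⟨progressions, fun V hV hVne => ?_, ?_⟩
  · obtain ⟨d, hd, hprog⟩ := progressions V hV hVne
    refine ⟨d, hd, fun l => ⟨_, (hprog l).1, ?_, (hprog l).2.2⟩⟩
    rw [(hprog l).2.1]
    exact_mod_cast Nat.le_mul_of_pos_right l hd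
  · rintro ⟨A, hA, hA', H, hH, hdisj⟩
    refine not_pairwise_disjoint_image_zpow hT hT' (fun V hV hVne => ?_) hA hA' hH hdisj
    obtain ⟨d, hd, hfip⟩ := hyp V hV hVne
    exact ⟨d, hd, fun k => by simpa using hfip {0, k}⟩
end
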